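/- arXiv:2510.26107 — 2 statements merged into one kernel-verified Lean document; each statement's English description precedes it below -/
import Mathlib

section
/- An element x ∈ L satisfies ⟨x, d_i⟩ = 0 for all 1 ≤ i ≤ 10 if and only if x is an integer multiple of f. (This is the lattice-theoretic content of the claim that a curve class orthogonal to all D_i must be linearly equivalent to a multiple of F.) -/
/-- The lattice `L = ℤ^{11}` with basis `h, e₁, …, e₁₀`. -/
abbrev L : Type := Fin 11 → ℤ

/-- The hyperplane class `h`. -/
def h : L := fun j => if j = 0 then 1 else 0

/-- The exceptional classes `e i` for `i = 1, …, 10`. -/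
def e (i : Fin 10) : L := fun j => if j = i.succ then 1 else 0

/-- The intersection form: `⟨h,h⟩ = 1`, `⟨eᵢ,eᵢ⟩ = -1`, off-diagonal zero. -/
def form (x y : L) : ℤ := x 0 * y 0 - ∑ i : Fin 10, x i.succ * y i.succ

/-- The canonical class `K = -3h + ∑ eᵢ`. -/
def K : L := (-3 : ℤ) • h + ∑ i : Fin 10, e i

/-- `f = -19h + 6∑ eᵢ`. -/
def f : L := (-19 : ℤ) • h + (6 : ℤ) • ∑ i : Fin 10, e i

/-- `d i = -6h + 2∑ eⱼ - eᵢ`. -/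
def d (i : Fin 10) : L := (-6 : ℤ) • h + (2 : ℤ) • ∑ j : Fin 10, e j - e i

lemma sum_e_apply_zero : ∑ i : Fin 10, e i 0 = 0 := by
  simp [e, eq_comm, Fin.succ_ne_zero]

lemma sum_e_apply_succ (j : Fin 10) : ∑ i : Fin 10, e i j.succ = 1 := by
  simp [e, Fin.succ_inj]

lemma f_apply_zero : f 0 = -19 := by
  simp [f, h, sum_e_apply_zero]

lemma f_apply_succ (j : Fin 10) : f j.succ = 6 := by
  simp [f, h, sum_e_apply_succ, Fin.succ_ne_zero]

lemma d_apply_zero (i : Fin 10) : d i 0 = -6 := by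
  simp [d, h, e, eq_comm, Fin.succ_ne_zero]

lemma d_apply_succ (i j : Fin 10) : d i j.succ = 2 - if j = i then 1 else 0 := by
  simp [d, h, e, Fin.succ_inj, Fin.succ_ne_zero]

lemma form_smul_left (n : ℤ) (x y : L) : form (n • x) y = n * form x y := by
  simp only [form, Pi.smul_apply, smul_eq_mul, mul_assoc, ← Finset.mul_sum, mul_sub]

lemma form_d (x : L) (i : Fin 10) :
    form x (d i) = x i.succ - 6 * x 0 - 2 * ∑ j : Fin 10, x j.succ := by
  have hsum : ∑ j : Fin 10, x j.succ * d i j.succ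
      = (∑ j : Fin 10, x j.succ) * 2 - x i.succ := by
    simp only [d_apply_succ, mul_sub, mul_ite, mul_one, mul_zero, Finset.sum_sub_distrib,
      Finset.sum_ite_eq', Finset.mem_univ, if_true, Finset.sum_mul]
  rw [form, d_apply_zero, hsum]
  ring

lemma form_f_d (i : Fin 10) : form f (d i) = 0 := by
  simp only [form_d, f_apply_zero, f_apply_succ, Finset.sum_const, Finset.card_univ,
    Fintype.card_fin]
  norm_num

lemma eq_smul_f_iff (x : L) (n : ℤ) :
    x = n • f ↔ x 0 = -19 * n ∧ ∀ j : Fin 10, x j.succ = 6 * n := by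
  refine ⟨fun hx => ?_, fun ⟨h0, hsucc⟩ => ?_⟩
  · subst hx
    simp [f_apply_zero, f_apply_succ, mul_comm]
  · funext j
    cases j using Fin.cases with
    | zero => simp [h0, f_apply_zero, mul_comm]
    | succ j => simp [hsucc, f_apply_succ, mul_comm]

/-- Eliminating the common value `c` of the `y i` gives `6 a = -19 c`; the coprimality
of `6` and `19` is witnessed explicitly by `n = -(a + 3 c)`. -/
lemma exists_of_forall_eq_add_sum (a : ℤ) (y : Fin 10 → ℤ)
    (hy : ∀ i, y i = 6 * a + 2 * ∑ j, y j) :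
    ∃ n : ℤ, a = -19 * n ∧ ∀ i, y i = 6 * n := by
  set c := 6 * a + 2 * ∑ j, y j with hc
  have hsum : ∑ j, y j = 10 * c := by
    simp [Finset.sum_congr rfl fun j _ => hy j]
  exact ⟨-(a + 3 * c), by omega, fun i => by rw [hy i]; omega⟩

theorem stmt_1 (x : L) :
    (∀ i : Fin 10, form x (d i) = 0) ↔ ∃ n : ℤ, x = n • f := by
  constructor
  · intro hx
    have hcoord : ∀ i : Fin 10, x i.succ = 6 * x 0 + 2 * ∑ j : Fin 10, x j.succ :=
      fun i => by linarith [form_d x i, hx i]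
    obtain ⟨n, h0, hsucc⟩ := exists_of_forall_eq_add_sum (x 0) (fun j => x j.succ) hcoord
    exact ⟨n, (eq_smul_f_iff x n).2 ⟨h0, hsucc⟩⟩
  · rintro ⟨n, rfl⟩ i
    rw [form_smul_left, form_f_d, mul_zero]
end

section
/- If σ is the ℤ-linear endomorphism of L with σ(h) = f and σ(e_i) = d_i for all 1 ≤ i ≤ 10, then χ(σ(D)) = χ(D) for every D ∈ L; that is, the reflection sending F ↦ H and D_i ↦ E_i preserves Euler characteristics. -/
/-- The Riemann–Roch Euler characteristic, defined by `2χ(D) = 2 + ⟨D, D - K⟩`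
(the integer `⟨D, D - K⟩` is always even, so integer division is exact). -/
def chi (D : L) : ℤ := (2 + form D (D - K)) / 2

/-! The map `σ` is an isometry of the intersection form: on the basis this is the
computation `⟨f, f⟩ = 1`, `⟨f, dᵢ⟩ = 0`, `⟨dᵢ, dⱼ⟩ = -δᵢⱼ`. It also fixes the canonical
class, since `-3f + ∑ dᵢ = K`. As `χ(D)` only depends on `⟨D, D⟩` and `⟨D, K⟩`, it is
preserved by `σ`. -/

theorem LinearMap.BilinForm.apply_map_map_of_basis {R M N ι : Type*} [CommSemiring R]
    [AddCommMonoid M] [Module R M] [AddCommMonoid N] [Module R N]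
    {B : LinearMap.BilinForm R M} {B' : LinearMap.BilinForm R N} (b : Module.Basis ι R M)
    {σ : M →ₗ[R] N} (hσ : ∀ i j, B' (σ (b i)) (σ (b j)) = B (b i) (b j)) (x y : M) :
    B' (σ x) (σ y) = B x y :=
  LinearMap.congr_fun₂ (LinearMap.ext_basis b b (B := B'.compl₁₂ σ σ) hσ) x y

def formBilin : LinearMap.BilinForm ℤ L :=
  LinearMap.mk₂ ℤ form
    (fun _ _ _ => by simp only [form, Pi.add_apply, add_mul, Finset.sum_add_distrib]; ring)
    (fun _ _ _ => by
      simp only [form, Pi.smul_apply, smul_eq_mul, mul_assoc, ← Finset.mul_sum]; ring)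
    (fun _ _ _ => by simp only [form, Pi.add_apply, mul_add, Finset.sum_add_distrib]; ring)
    (fun c _ _ => by
      simp only [form, Pi.smul_apply, smul_eq_mul, mul_left_comm _ c, ← Finset.mul_sum]; ring)

lemma formBilin_apply (x y : L) : formBilin x y = form x y := rfl

lemma formBilin_comm (x y : L) : formBilin x y = formBilin y x := by
  simp only [formBilin_apply, form, mul_comm]

@[simp] lemma formBilin_h_h : formBilin h h = 1 := by
  simp [formBilin_apply, form, h, Fin.succ_ne_zero]

@[simp] lemma formBilin_h_e (i : Fin 10) : formBilin h (e i) = 0 := by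
  simp [formBilin_apply, form, h, e, (Fin.succ_ne_zero _).symm]

@[simp] lemma formBilin_e_h (i : Fin 10) : formBilin (e i) h = 0 := by
  rw [formBilin_comm, formBilin_h_e]

@[simp] lemma formBilin_e_e (i j : Fin 10) :
    formBilin (e i) (e j) = -if i = j then 1 else 0 := by
  simp [formBilin_apply, form, e, Fin.succ_ne_zero, eq_comm]

lemma formBilin_h_sum : formBilin h (∑ i, e i) = 0 := by
  simp [map_sum]

lemma formBilin_sum_h : formBilin (∑ i, e i) h = 0 := by
  rw [formBilin_comm, formBilin_h_sum]

lemma formBilin_e_sum (i : Fin 10) : formBilin (e i) (∑ j, e j) = -1 := by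
  simp [map_sum]

lemma formBilin_sum_e (i : Fin 10) : formBilin (∑ j, e j) (e i) = -1 := by
  rw [formBilin_comm, formBilin_e_sum]

lemma formBilin_sum_sum : formBilin (∑ i, e i) (∑ j, e j) = -10 := by
  simp [map_sum]

lemma formBilin_f_f : formBilin f f = 1 := by
  simp only [f, map_add, map_smul, LinearMap.add_apply, LinearMap.smul_apply, formBilin_h_h,
    formBilin_h_sum, formBilin_sum_h, formBilin_sum_sum, smul_eq_mul]
  norm_num

lemma formBilin_f_d (i : Fin 10) : formBilin f (d i) = 0 := by
  simp only [f, d, map_add, map_sub, map_smul, LinearMap.add_apply, LinearMap.smul_apply,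
    formBilin_h_h, formBilin_h_e, formBilin_h_sum, formBilin_sum_h, formBilin_sum_e,
    formBilin_sum_sum, smul_eq_mul]
  norm_num

lemma formBilin_d_d (i j : Fin 10) : formBilin (d i) (d j) = -if i = j then 1 else 0 := by
  simp only [d, map_add, map_sub, map_smul, LinearMap.add_apply, LinearMap.sub_apply,
    LinearMap.smul_apply, formBilin_h_h, formBilin_h_e, formBilin_e_h, formBilin_e_e,
    formBilin_h_sum, formBilin_sum_h, formBilin_e_sum, formBilin_sum_e, formBilin_sum_sum,
    smul_eq_mul]
  ring

lemma basisFun_zero : Pi.basisFun ℤ (Fin 11) 0 = h := by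
  funext j
  simp [h, Pi.single_apply]

lemma basisFun_succ (i : Fin 10) : Pi.basisFun ℤ (Fin 11) i.succ = e i := by
  funext j
  simp [e, Pi.single_apply]

lemma K_eq_smul_f_add_sum_d : K = (-3 : ℤ) • f + ∑ i, d i := by
  simp only [K, f, d, Finset.sum_sub_distrib, Finset.sum_add_distrib, Finset.sum_const,
    Finset.card_univ, Fintype.card_fin]
  module

lemma chi_map_of_isometry {σ : L →ₗ[ℤ] L}
    (hσ : ∀ x y, formBilin (σ x) (σ y) = formBilin x y)
    (hK : σ K = K) (D : L) : chi (σ D) = chi D := by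
  simp only [chi, ← formBilin_apply]
  conv_lhs => rw [← hK, ← map_sub, hσ]

lemma formBilin_map_map {σ : L →ₗ[ℤ] L} (hh : σ h = f) (he : ∀ i : Fin 10, σ (e i) = d i)
    (x y : L) : formBilin (σ x) (σ y) = formBilin x y := by
  refine LinearMap.BilinForm.apply_map_map_of_basis (Pi.basisFun ℤ (Fin 11)) (fun i j => ?_) x y
  cases i using Fin.cases <;> cases j using Fin.cases <;>
    simp only [basisFun_zero, basisFun_succ, hh, he, formBilin_f_f, formBilin_f_d,
      formBilin_comm (d _) f, formBilin_d_d, formBilin_h_h, formBilin_h_e, formBilin_e_h,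
      formBilin_e_e]

lemma map_K {σ : L →ₗ[ℤ] L} (hh : σ h = f) (he : ∀ i : Fin 10, σ (e i) = d i) :
    σ K = K := by
  conv_lhs => rw [K]
  simp only [map_add, map_smul, map_sum, hh, he, K_eq_smul_f_add_sum_d]

theorem stmt_3 (σ : L →ₗ[ℤ] L) (hh : σ h = f) (he : ∀ i : Fin 10, σ (e i) = d i) :
    ∀ D : L, chi (σ D) = chi D :=
  chi_map_of_isometry (formBilin_map_map hh he) (map_K hh he)
end
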